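/- Let L be a Lie conformal superalgebra with a conformal representation ρ on a ℤ₂-graded H-module V, and let φ_λ : L ⊗ V → V[λ] be a parity-preserving sesqui-linear map. On the H-module V ⊕ Vε ≅ k[ε] ⊗ V/(ε²) (with ∂(x + yε) = ∂x + (∂y)ε), define ρ^ε_λ(a, x + yε) = ρ_λ(a, x) + (ρ_λ(a, y) + φ_λ(a, x))ε. Then ρ^ε is a conformal representation of L on V ⊕ Vε if and only if φ satisfies φ_{λ+μ}([a_λ b], x) = φ_λ(a, ρ_μ(b, x)) + ρ_λ(a, φ_μ(b, x)) − (−1)^{|a||b|} φ_μ(b, ρ_λ(a, x)) − (−1)^{|a||b|} ρ_μ(b, φ_λ(a, x)) for all homogeneous a, b ∈ L and all x ∈ V. -/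

import Mathlib

open Finsupp

noncomputable section

variable (k : Type) [Field k] [CharZero k]

section Base

variable {M N : Type} [AddCommGroup M] [Module k M] [AddCommGroup N] [Module k N]

/-- Multiplication by `λ` on `M[λ] := ℕ →₀ M`. -/
def lamMul : (ℕ →₀ M) →ₗ[k] (ℕ →₀ M) := Finsupp.lmapDomain M k Nat.succ

/-- Apply a linear map to every coefficient of a polynomial. -/
def cw (f : M →ₗ[k] N) : (ℕ →₀ M) →ₗ[k] (ℕ →₀ N) := Finsupp.mapRange.linearMap f

/-- The constant-polynomial embedding `M → M[λ]`. -/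
def cst : M →ₗ[k] (ℕ →₀ M) := Finsupp.lsingle 0

/-- Multiplication by `λ` on `M[λ,μ] := ℕ →₀ (ℕ →₀ M)` (outer variable `μ`, inner `λ`). -/
def lamMul2 : (ℕ →₀ (ℕ →₀ M)) →ₗ[k] (ℕ →₀ (ℕ →₀ M)) := cw k (lamMul k)

/-- Multiplication by `μ` on `M[λ,μ]`. -/
def muMul2 : (ℕ →₀ (ℕ →₀ M)) →ₗ[k] (ℕ →₀ (ℕ →₀ M)) := Finsupp.lmapDomain (ℕ →₀ M) k Nat.succ

/-- The constant embedding `M → M[λ,μ]`. -/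
def cst2 : M →ₗ[k] (ℕ →₀ (ℕ →₀ M)) := (cst k).comp (cst k)

/-- Interchange of the two variables of `M[λ,μ]`. -/
def swapVar : (ℕ →₀ (ℕ →₀ M)) →ₗ[k] (ℕ →₀ (ℕ →₀ M)) :=
  Finsupp.lsum k fun n => cw k (Finsupp.lsingle n)

/-- The substitution `λ ↦ -∂-λ` on `M[λ]`, where `∂` acts on `M` via `D`. -/
def substNeg (D : M →ₗ[k] M) : (ℕ →₀ M) →ₗ[k] (ℕ →₀ M) :=
  Finsupp.lsum k fun n => ((-(cw k D) - lamMul k) ^ n) ∘ₗ cst k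

/-- The substitution `ν ↦ λ+μ` from `M[ν]` to `M[λ,μ]`. -/
def substAdd : (ℕ →₀ M) →ₗ[k] (ℕ →₀ (ℕ →₀ M)) :=
  Finsupp.lsum k fun n => ((lamMul2 k + muMul2 k) ^ n) ∘ₗ cst2 k

end Base
section Ops

variable {A B C V W L P : Type} [AddCommGroup A] [Module k A] [AddCommGroup B] [Module k B]
  [AddCommGroup C] [Module k C] [AddCommGroup V] [Module k V] [AddCommGroup W] [Module k W]
  [AddCommGroup L] [Module k L] [AddCommGroup P] [Module k P]

/-- `P_λ(a, Q_μ(b, c))`, an element of `W[λ,μ]` (outer variable `μ`, inner `λ`). -/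
def opComp (F : A →ₗ[k] C →ₗ[k] (ℕ →₀ W)) (G : B →ₗ[k] V →ₗ[k] (ℕ →₀ C))
    (a : A) (b : B) (c : V) : ℕ →₀ (ℕ →₀ W) := cw k (F a) (G b c)

/-- `Q_μ(b, P_λ(a, c))`, an element of `W[λ,μ]` (outer variable `μ`, inner `λ`). -/
def opCompSwap (F : B →ₗ[k] C →ₗ[k] (ℕ →₀ W)) (G : A →ₗ[k] V →ₗ[k] (ℕ →₀ C))
    (b : B) (a : A) (c : V) : ℕ →₀ (ℕ →₀ W) := swapVar k (cw k (F b) (G a c))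

/-- `Q_{λ+μ}(P_λ(a, b), c)`, an element of `W[λ,μ]` (outer variable `μ`, inner `λ`). -/
def opSubst (F : A →ₗ[k] B →ₗ[k] (ℕ →₀ C)) (G : C →ₗ[k] V →ₗ[k] (ℕ →₀ W))
    (a : A) (b : B) (c : V) : ℕ →₀ (ℕ →₀ W) :=
  Finsupp.lsum k (fun n => ((lamMul2 k (M := W)) ^ n) ∘ₗ substAdd k) (cw k (G.flip c) (F a b))

end Ops

/-- The Koszul sign `(-1)^{|a||b|}` attached to parities `i`, `j`. -/
def sgn (i j : ZMod 2) : ℤ := if i = 1 ∧ j = 1 then -1 else 1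

section Structures

variable {A B C L V P : Type} [AddCommGroup A] [Module k A] [AddCommGroup B] [Module k B]
  [AddCommGroup C] [Module k C]
  [AddCommGroup L] [Module k L] [AddCommGroup V] [Module k V] [AddCommGroup P] [Module k P]

/-- A `ℤ₂`-graded module over `H = k[∂]`, where `∂` acts via `D`:
the two graded components are complementary and `∂`-invariant. -/
structure IsGradedHMod (D : L →ₗ[k] L) (par : ZMod 2 → Submodule k L) : Prop where
  sup_eq_top : par 0 ⊔ par 1 = ⊤
  inf_eq_bot : par 0 ⊓ par 1 = ⊥
  map_d : ∀ i a, a ∈ par i → D a ∈ par i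

/-- Sesqui-linearity of a pairing `A ⊗ B → C[λ]` with respect to the `∂`-actions
`DA`, `DB`, `DC`: `F(∂a, b) = -λ F(a,b)` and `F(a, ∂b) = (∂+λ) F(a,b)`. -/
structure IsSesqui (DA : A →ₗ[k] A) (DB : B →ₗ[k] B) (DC : C →ₗ[k] C)
    (F : A →ₗ[k] B →ₗ[k] (ℕ →₀ C)) : Prop where
  dleft : ∀ a b, F (DA a) b = -(lamMul k (F a b))
  dright : ∀ a b, F a (DB b) = cw k DC (F a b) + lamMul k (F a b)

/-- A Lie conformal superalgebra structure on the `H`-module `L` (with `∂` acting via `D`)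
with `ℤ₂`-grading `par` and `λ`-bracket `Br`. -/
structure IsLieConfSuper (D : L →ₗ[k] L) (par : ZMod 2 → Submodule k L)
    (Br : L →ₗ[k] L →ₗ[k] (ℕ →₀ L)) : Prop where
  graded : IsGradedHMod k D par
  sesqui : IsSesqui k D D D Br
  parity : ∀ i j a b, a ∈ par i → b ∈ par j → ∀ n, Br a b n ∈ par (i + j)
  skew : ∀ i j a b, a ∈ par i → b ∈ par j → Br a b = -(sgn i j • substNeg k D (Br b a))
  jacobi : ∀ i j a b c, a ∈ par i → b ∈ par j →
    opComp k Br Br a b c = opSubst k Br Br a b c + sgn i j • opCompSwap k Br Br b a c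

/-- A Poisson conformal superalgebra structure on the `H`-module `P`, with `λ`-bracket `Br`
and conformally associative, supercommutative product `Ml`, linked by the conformal
Leibniz rule. -/
structure IsPoissonConfSuper (D : P →ₗ[k] P) (par : ZMod 2 → Submodule k P)
    (Br Ml : P →ₗ[k] P →ₗ[k] (ℕ →₀ P)) : Prop where
  lie : IsLieConfSuper k D par Br
  mul_sesqui : IsSesqui k D D D Ml
  mul_parity : ∀ i j a b, a ∈ par i → b ∈ par j → ∀ n, Ml a b n ∈ par (i + j)
  assoc : ∀ a b c, opComp k Ml Ml a b c = opSubst k Ml Ml a b c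
  comm : ∀ i j a b, a ∈ par i → b ∈ par j → Ml a b = sgn i j • substNeg k D (Ml b a)
  leibniz : ∀ i j a b c, a ∈ par i → b ∈ par j →
    opComp k Br Ml a b c = opSubst k Br Ml a b c + sgn i j • opCompSwap k Ml Br b a c

/-- A conformal representation of the Lie conformal superalgebra `(L, D, par, Br)` on the
`ℤ₂`-graded `H`-module `(V, DV, parV)`. -/
structure IsConfRep (D : L →ₗ[k] L) (par : ZMod 2 → Submodule k L)
    (Br : L →ₗ[k] L →ₗ[k] (ℕ →₀ L)) (DV : V →ₗ[k] V) (parV : ZMod 2 → Submodule k V)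
    (ρ : L →ₗ[k] V →ₗ[k] (ℕ →₀ V)) : Prop where
  sesqui : IsSesqui k D DV DV ρ
  parity : ∀ i j a x, a ∈ par i → x ∈ parV j → ∀ n, ρ a x n ∈ parV (i + j)
  jacobi : ∀ i j a b x, a ∈ par i → b ∈ par j →
    opComp k ρ ρ a b x - sgn i j • opCompSwap k ρ ρ b a x = opSubst k Br ρ a b x

/-- Finiteness of an `H`-module: it is generated, as a `k[∂]`-module, by finitely
many elements. -/
def IsHFinite (DV : V →ₗ[k] V) : Prop :=
  ∃ s : Finset V, ∀ W : Submodule k V, (∀ x ∈ W, DV x ∈ W) → (↑s : Set V) ⊆ ↑W → W = ⊤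

/-- The Lie conformal superalgebra `(L, D, par, Br)` admits a finite faithful conformal
representation. -/
def HasFFR (D : L →ₗ[k] L) (par : ZMod 2 → Submodule k L)
    (Br : L →ₗ[k] L →ₗ[k] (ℕ →₀ L)) : Prop :=
  ∃ (V : Type) (_ : AddCommGroup V) (_ : Module k V) (DV : V →ₗ[k] V)
    (parV : ZMod 2 → Submodule k V) (ρ : L →ₗ[k] V →ₗ[k] (ℕ →₀ V)),
    IsGradedHMod k DV parV ∧ IsConfRep k D par Br DV parV ρ ∧ IsHFinite k DV ∧
      ∀ a : L, a ≠ 0 → ρ a ≠ 0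

/-- `ρ` (defined on the ambient space `P`) restricts to a conformal representation of the
Lie conformal subalgebra `L ≤ P` (with ambient `λ`-bracket `Br`) on `(V, DV, parV)`. -/
def IsConfRepOn (D : P →ₗ[k] P) (par : ZMod 2 → Submodule k P)
    (Br : P →ₗ[k] P →ₗ[k] (ℕ →₀ P)) (L : Submodule k P)
    (DV : V →ₗ[k] V) (parV : ZMod 2 → Submodule k V)
    (ρ : P →ₗ[k] V →ₗ[k] (ℕ →₀ V)) : Prop :=
  (∀ a ∈ L, ∀ x, ρ (D a) x = -(lamMul k (ρ a x))) ∧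
  (∀ a ∈ L, ∀ x, ρ a (DV x) = cw k DV (ρ a x) + lamMul k (ρ a x)) ∧
  (∀ i j, ∀ a ∈ L ⊓ par i, ∀ x ∈ parV j, ∀ n, ρ a x n ∈ parV (i + j)) ∧
  (∀ i j, ∀ a ∈ L ⊓ par i, ∀ b ∈ L ⊓ par j, ∀ x,
    opComp k ρ ρ a b x - sgn i j • opCompSwap k ρ ρ b a x = opSubst k Br ρ a b x)

end Structures
section Extension

variable {A B W V : Type} [AddCommGroup A] [Module k A] [AddCommGroup B] [Module k B]
  [AddCommGroup W] [Module k W] [AddCommGroup V] [Module k V]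

/-- The sesqui-linear extension of a pairing `F : A ⊗ B → W[λ]` to a pairing
`(H ⊗ A) ⊗ (H ⊗ B) → W[λ]` (where `H ⊗ A` is realized as `ℕ →₀ A`, the index recording
the power of `∂`): `F(∂^n a, ∂^m b) = (-λ)^n (∂+λ)^m F(a, b)`, where `∂` acts on `W[λ]`
coefficientwise via `DW`. -/
def extSesqui (DW : W →ₗ[k] W) (F : A →ₗ[k] B →ₗ[k] (ℕ →₀ W)) :
    (ℕ →₀ A) →ₗ[k] (ℕ →₀ B) →ₗ[k] (ℕ →₀ W) :=
  Finsupp.lsum k fun n =>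
    (Finsupp.lsum (R := k) k).toLinearMap.comp <| LinearMap.pi fun m =>
      (LinearMap.llcomp k B (ℕ →₀ W) (ℕ →₀ W)
        (((-(lamMul k (M := W))) ^ n) * ((cw k DW + lamMul k) ^ m))).comp F

/-- The action of `∂` on `H ⊗ V`, realized as `ℕ →₀ V`. -/
def DD (V : Type) [AddCommGroup V] [Module k V] : (ℕ →₀ V) →ₗ[k] (ℕ →₀ V) :=
  Finsupp.lmapDomain V k Nat.succ

/-- The canonical embedding `V → H ⊗ V`. -/
def emb (V : Type) [AddCommGroup V] [Module k V] : V →ₗ[k] (ℕ →₀ V) :=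
  Finsupp.lsingle 0

/-- A grading of `V` lifts coefficientwise to a grading of `H ⊗ V = ℕ →₀ V`. -/
def liftPar {V : Type} [AddCommGroup V] [Module k V] (par : ZMod 2 → Submodule k V)
    (i : ZMod 2) : Submodule k (ℕ →₀ V) where
  carrier := { f | ∀ n, f n ∈ par i }
  add_mem' := fun hf hg n => by
    simpa only [Finsupp.add_apply] using add_mem (hf n) (hg n)
  zero_mem' := fun n => by simp
  smul_mem' := fun c f hf n => by
    simpa only [Finsupp.smul_apply] using Submodule.smul_mem _ c (hf n)

end Extension

section Super

variable (p : Type) [NonUnitalRing p] [Module k p] [SMulCommClass k p p] [IsScalarTower k p p]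

/-- An (ordinary) Poisson superalgebra structure on the `ℤ₂`-graded associative
supercommutative algebra `p`, with super Lie bracket `br`. -/
structure IsPoissonSuper (par : ZMod 2 → Submodule k p) (br : p →ₗ[k] p →ₗ[k] p) : Prop where
  sup_eq_top : par 0 ⊔ par 1 = ⊤
  inf_eq_bot : par 0 ⊓ par 1 = ⊥
  mul_mem : ∀ i j (a b : p), a ∈ par i → b ∈ par j → a * b ∈ par (i + j)
  mul_scomm : ∀ i j (a b : p), a ∈ par i → b ∈ par j → a * b = sgn i j • (b * a)
  br_mem : ∀ i j a b, a ∈ par i → b ∈ par j → br a b ∈ par (i + j)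
  br_skew : ∀ i j a b, a ∈ par i → b ∈ par j → br a b = -(sgn i j • br b a)
  br_jacobi : ∀ i j a b c, a ∈ par i → b ∈ par j →
    br a (br b c) = br (br a b) c + sgn i j • br b (br a c)
  leibniz : ∀ i j a b c, a ∈ par i → b ∈ par j →
    br a (b * c) = br a b * c + sgn i j • (b * br a c)

/-- An even derivation of the Poisson superalgebra `(p, par, br)`. -/
structure IsEvenDerivation (par : ZMod 2 → Submodule k p) (br : p →ₗ[k] p →ₗ[k] p)
    (d : p →ₗ[k] p) : Prop where
  even : ∀ i a, a ∈ par i → d a ∈ par i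
  map_mul : ∀ a b, d (a * b) = d a * b + a * d b
  map_br : ∀ a b, d (br a b) = br (d a) b + br a (d b)

/-- Base pairing `a ⊗ b ↦ a b` (constant in `λ`) for the current/quadratic constructions. -/
def curMul0 : p →ₗ[k] p →ₗ[k] (ℕ →₀ (ℕ →₀ p)) :=
  (LinearMap.mul k p).compr₂ ((cst k).comp (emb k p))

/-- Base pairing `a ⊗ b ↦ {a, b}` (constant in `λ`) for the current construction. -/
def curBr0 (br : p →ₗ[k] p →ₗ[k] p) : p →ₗ[k] p →ₗ[k] (ℕ →₀ (ℕ →₀ p)) :=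
  br.compr₂ ((cst k).comp (emb k p))

/-- Base pairing `a ⊗ b ↦ {a, b} + ∂ (d a · b) + λ d(a b)` of the Poisson conformal
superalgebra `L(p, d)`. -/
def qua0 (br : p →ₗ[k] p →ₗ[k] p) (d : p →ₗ[k] p) : p →ₗ[k] p →ₗ[k] (ℕ →₀ (ℕ →₀ p)) :=
  br.compr₂ ((cst k).comp (emb k p))
    + ((LinearMap.mul k p).comp d).compr₂ ((cst k).comp ((DD k p).comp (emb k p)))
    + ((LinearMap.mul k p).compr₂ d).compr₂ ((lamMul k).comp ((cst k).comp (emb k p)))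

/-- The multiplication `(a ∂^n)_λ (b ∂^m) = (-λ)^n (∂+λ)^m (a b)` on `H ⊗ p`. -/
def LpdMul : (ℕ →₀ p) →ₗ[k] (ℕ →₀ p) →ₗ[k] (ℕ →₀ (ℕ →₀ p)) :=
  extSesqui k (DD k p) (curMul0 k p)

/-- The `λ`-bracket of the current Poisson conformal superalgebra `Cur p`. -/
def CurBr (br : p →ₗ[k] p →ₗ[k] p) : (ℕ →₀ p) →ₗ[k] (ℕ →₀ p) →ₗ[k] (ℕ →₀ (ℕ →₀ p)) :=
  extSesqui k (DD k p) (curBr0 k p br)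

/-- The `λ`-bracket of the Poisson conformal superalgebra `L(p, d)`. -/
def LpdBr (br : p →ₗ[k] p →ₗ[k] p) (d : p →ₗ[k] p) :
    (ℕ →₀ p) →ₗ[k] (ℕ →₀ p) →ₗ[k] (ℕ →₀ (ℕ →₀ p)) :=
  extSesqui k (DD k p) (qua0 k p br d)

/-- The twisted action `ρ̂_λ(a, u) = [a_λ u] + λ (a_λ u)` on `L(p, d)`. -/
def LpdRho (br : p →ₗ[k] p →ₗ[k] p) (d : p →ₗ[k] p) :
    (ℕ →₀ p) →ₗ[k] (ℕ →₀ p) →ₗ[k] (ℕ →₀ (ℕ →₀ p)) :=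
  LpdBr k p br d + (LpdMul k p).compr₂ (lamMul k)

end Super


/-! Projecting `V × V` onto its two factors splits the conformal Jacobi identity for `ρ^ε` at
`x + yε` into the Jacobi identity for `ρ` at `x` and, in the `ε`-component, the Jacobi identity
for `ρ` at `y` plus the cocycle identity for `φ` at `x`; so once `ρ` is a representation only the
cocycle identity is left. The projections pass through `opComp`, `opCompSwap` and `opSubst`
because these operations are natural in the coefficient module. -/

section

omit [CharZero k]

variable {A B C M N Q V W X Y : Type} [AddCommGroup A] [Module k A] [AddCommGroup B] [Module k B]
  [AddCommGroup C] [Module k C] [AddCommGroup M] [Module k M] [AddCommGroup N] [Module k N]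
  [AddCommGroup Q] [Module k Q] [AddCommGroup V] [Module k V] [AddCommGroup W] [Module k W]
  [AddCommGroup X] [Module k X] [AddCommGroup Y] [Module k Y]

@[simp]
lemma cw_apply (f : M →ₗ[k] N) (u : ℕ →₀ M) (n : ℕ) : cw k f u n = f (u n) := rfl

lemma cw_cw (g : N →ₗ[k] Q) (f : M →ₗ[k] N) (u : ℕ →₀ M) :
    cw k g (cw k f u) = cw k (g ∘ₗ f) u := by
  ext n; rfl

lemma cw_comp_cw (g : N →ₗ[k] Q) (f : M →ₗ[k] N) : cw k g ∘ₗ cw k f = cw k (g ∘ₗ f) :=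
  LinearMap.ext (cw_cw k g f)

lemma cw_add (f g : M →ₗ[k] N) : cw k (f + g) = cw k f + cw k g := by
  ext u n; rfl

lemma lsingle_comp (f : M →ₗ[k] N) (n : ℕ) :
    Finsupp.lsingle n ∘ₗ f = cw k f ∘ₗ Finsupp.lsingle n := by
  ext m : 1
  simp [cw]

lemma lamMul_cw (f : M →ₗ[k] N) (u : ℕ →₀ M) : lamMul k (cw k f u) = cw k f (lamMul k u) :=
  Finsupp.mapDomain_mapRange _ u _ f.map_zero f.map_add

lemma lamMul_comp_cw (f : M →ₗ[k] N) : lamMul k ∘ₗ cw k f = cw k f ∘ₗ lamMul k :=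
  LinearMap.ext (lamMul_cw k f)

lemma lamMul2_comp_cw_cw (f : M →ₗ[k] N) :
    lamMul2 k ∘ₗ cw k (cw k f) = cw k (cw k f) ∘ₗ lamMul2 k := by
  rw [lamMul2, lamMul2, cw_comp_cw, cw_comp_cw, lamMul_comp_cw]

lemma lsum_comp_cw (T : ℕ → X →ₗ[k] M) (T' : ℕ → Y →ₗ[k] N) (g : X →ₗ[k] Y) (h : M →ₗ[k] N)
    (hT : ∀ n, T' n ∘ₗ g = h ∘ₗ T n) :
    Finsupp.lsum k T' ∘ₗ cw k g = h ∘ₗ Finsupp.lsum k T :=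
  Finsupp.lhom_ext fun n x => by
    simpa [cw] using LinearMap.congr_fun (hT n) x

lemma substAdd_comp_cw (f : M →ₗ[k] N) :
    substAdd k ∘ₗ cw k f = cw k (cw k f) ∘ₗ substAdd k := by
  have hμ : muMul2 k ∘ₗ cw k (cw k f) = cw k (cw k f) ∘ₗ muMul2 k := lamMul_comp_cw k (cw k f)
  have hsum : (lamMul2 k + muMul2 k) ∘ₗ cw k (cw k f)
      = cw k (cw k f) ∘ₗ (lamMul2 k + muMul2 k) := by
    rw [LinearMap.add_comp, LinearMap.comp_add, lamMul2_comp_cw_cw, hμ]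
  refine lsum_comp_cw k _ _ _ _ fun n => ?_
  have hcst : cst2 k ∘ₗ f = cw k (cw k f) ∘ₗ cst2 k := by
    simp only [cst2, cst]
    rw [LinearMap.comp_assoc, lsingle_comp k f, ← LinearMap.comp_assoc,
      lsingle_comp k (cw k f), LinearMap.comp_assoc]
  rw [LinearMap.comp_assoc, hcst, ← LinearMap.comp_assoc,
    Module.End.commute_pow_left_of_commute hsum, LinearMap.comp_assoc]

lemma swapVar_cw_cw (f : M →ₗ[k] N) (u : ℕ →₀ (ℕ →₀ M)) :
    swapVar k (cw k (cw k f) u) = cw k (cw k f) (swapVar k u) := by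
  have h : swapVar k ∘ₗ cw k (cw k f) = cw k (cw k f) ∘ₗ swapVar k :=
    lsum_comp_cw k _ _ _ _ fun n => by rw [cw_comp_cw, cw_comp_cw, lsingle_comp]
  exact LinearMap.congr_fun h u

lemma cw_cw_prod_ext_iff (u v : ℕ →₀ (ℕ →₀ (M × N))) :
    u = v ↔ cw k (cw k (LinearMap.fst k M N)) u = cw k (cw k (LinearMap.fst k M N)) v
      ∧ cw k (cw k (LinearMap.snd k M N)) u = cw k (cw k (LinearMap.snd k M N)) v := by
  refine ⟨by rintro rfl; exact ⟨rfl, rfl⟩, fun ⟨h₁, h₂⟩ => ?_⟩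
  ext n m : 2
  exact Prod.ext (DFunLike.congr_fun (DFunLike.congr_fun h₁ n) m)
    (DFunLike.congr_fun (DFunLike.congr_fun h₂ n) m)

lemma opComp_compr₂ (F : A →ₗ[k] C →ₗ[k] (ℕ →₀ M)) (G : B →ₗ[k] V →ₗ[k] (ℕ →₀ C))
    (f : M →ₗ[k] N) (a : A) (b : B) (c : V) :
    opComp k (F.compr₂ (cw k f)) G a b c = cw k (cw k f) (opComp k F G a b c) := by
  simp only [opComp, cw_cw]
  rfl

lemma opComp_compl₂_left (F : A →ₗ[k] C →ₗ[k] (ℕ →₀ W)) (G : B →ₗ[k] V →ₗ[k] (ℕ →₀ X))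
    (g : X →ₗ[k] C) (a : A) (b : B) (c : V) :
    opComp k (F.compl₂ g) G a b c = opComp k F (G.compr₂ (cw k g)) a b c := by
  simp only [opComp, LinearMap.compr₂_apply, cw_cw]
  rfl

lemma opComp_compl₂_right (F : A →ₗ[k] C →ₗ[k] (ℕ →₀ W)) (G : B →ₗ[k] X →ₗ[k] (ℕ →₀ C))
    (g : V →ₗ[k] X) (a : A) (b : B) (c : V) :
    opComp k F (G.compl₂ g) a b c = opComp k F G a b (g c) := rfl

lemma opComp_add_left (F F' : A →ₗ[k] C →ₗ[k] (ℕ →₀ W)) (G : B →ₗ[k] V →ₗ[k] (ℕ →₀ C))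
    (a : A) (b : B) (c : V) :
    opComp k (F + F') G a b c = opComp k F G a b c + opComp k F' G a b c := by
  simp only [opComp, LinearMap.add_apply, cw_add]

lemma opComp_add_right (F : A →ₗ[k] C →ₗ[k] (ℕ →₀ W)) (G G' : B →ₗ[k] V →ₗ[k] (ℕ →₀ C))
    (a : A) (b : B) (c : V) :
    opComp k F (G + G') a b c = opComp k F G a b c + opComp k F G' a b c := by
  simp only [opComp, LinearMap.add_apply, map_add]

lemma opCompSwap_eq (F : B →ₗ[k] C →ₗ[k] (ℕ →₀ W)) (G : A →ₗ[k] V →ₗ[k] (ℕ →₀ C))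
    (b : B) (a : A) (c : V) :
    opCompSwap k F G b a c = swapVar k (opComp k F G b a c) := rfl

lemma opSubst_compr₂ (F : A →ₗ[k] B →ₗ[k] (ℕ →₀ C)) (G : C →ₗ[k] V →ₗ[k] (ℕ →₀ M))
    (f : M →ₗ[k] N) (a : A) (b : B) (c : V) :
    opSubst k F (G.compr₂ (cw k f)) a b c = cw k (cw k f) (opSubst k F G a b c) := by
  have hsum := lsum_comp_cw k (fun n => (lamMul2 k (M := M) ^ n) ∘ₗ substAdd k)
    (fun n => (lamMul2 k (M := N) ^ n) ∘ₗ substAdd k) (cw k f) (cw k (cw k f)) fun n => by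
      rw [LinearMap.comp_assoc, substAdd_comp_cw, ← LinearMap.comp_assoc,
        Module.End.commute_pow_left_of_commute (lamMul2_comp_cw_cw k f), LinearMap.comp_assoc]
  have hflip : (G.compr₂ (cw k f)).flip c = cw k f ∘ₗ G.flip c := rfl
  rw [opSubst, opSubst, hflip, ← cw_cw]
  exact LinearMap.congr_fun hsum _

lemma opSubst_compl₂ (F : A →ₗ[k] B →ₗ[k] (ℕ →₀ C)) (G : C →ₗ[k] X →ₗ[k] (ℕ →₀ W))
    (g : V →ₗ[k] X) (a : A) (b : B) (c : V) :
    opSubst k F (G.compl₂ g) a b c = opSubst k F G a b (g c) := rfl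

lemma opSubst_add (F : A →ₗ[k] B →ₗ[k] (ℕ →₀ C)) (G G' : C →ₗ[k] V →ₗ[k] (ℕ →₀ W))
    (a : A) (b : B) (c : V) :
    opSubst k F (G + G') a b c = opSubst k F G a b c + opSubst k F G' a b c := by
  have hflip : (G + G').flip c = G.flip c + G'.flip c := rfl
  simp only [opSubst, hflip, cw_add, LinearMap.add_apply, map_add]

section Deformation

variable {L : Type} [AddCommGroup L] [Module k L] (ρ φ : L →ₗ[k] V →ₗ[k] (ℕ →₀ V))

/-- `V ⊕ Vε` is modelled as `V × V`, the second factor being the `ε`-part. -/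
def deformRep : L →ₗ[k] (V × V) →ₗ[k] (ℕ →₀ (V × V)) :=
  ((ρ.compl₂ (LinearMap.fst k V V)).compr₂ (cw k (LinearMap.inl k V V)))
    + ((ρ.compl₂ (LinearMap.snd k V V)).compr₂ (cw k (LinearMap.inr k V V)))
    + ((φ.compl₂ (LinearMap.fst k V V)).compr₂ (cw k (LinearMap.inr k V V)))

lemma deformRep_apply (a : L) (v : V × V) :
    deformRep k ρ φ a v = cw k (LinearMap.inl k V V) (ρ a v.1)
      + cw k (LinearMap.inr k V V) (ρ a v.2) + cw k (LinearMap.inr k V V) (φ a v.1) := rfl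

lemma IsSesqui.deformRep {DL : L →ₗ[k] L} {DV : V →ₗ[k] V} (hρ : IsSesqui k DL DV DV ρ)
    (hφ : IsSesqui k DL DV DV φ) :
    IsSesqui k DL (DV.prodMap DV) (DV.prodMap DV) (deformRep k ρ φ) := by
  constructor
  · intro a v
    simp only [deformRep_apply, hρ.dleft, hφ.dleft, map_neg, map_add, lamMul_cw]
    abel
  · intro a v
    have hinl : DV.prodMap DV ∘ₗ LinearMap.inl k V V = LinearMap.inl k V V ∘ₗ DV := by
      ext <;> simp
    have hinr : DV.prodMap DV ∘ₗ LinearMap.inr k V V = LinearMap.inr k V V ∘ₗ DV := by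
      ext <;> simp
    simp only [deformRep_apply, LinearMap.prodMap_apply, hρ.dright, hφ.dright, map_add,
      cw_cw, hinl, hinr, lamMul_cw]
    abel

lemma deformRep_mem_prod {parL : ZMod 2 → Submodule k L} {parV : ZMod 2 → Submodule k V}
    (hρ : ∀ i j a x, a ∈ parL i → x ∈ parV j → ∀ n, ρ a x n ∈ parV (i + j))
    (hφ : ∀ i j a x, a ∈ parL i → x ∈ parV j → ∀ n, φ a x n ∈ parV (i + j))
    (i j : ZMod 2) (a : L) (v : V × V) (ha : a ∈ parL i) (hv : v ∈ (parV j).prod (parV j))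
    (n : ℕ) : deformRep k ρ φ a v n ∈ (parV (i + j)).prod (parV (i + j)) := by
  obtain ⟨hv₁, hv₂⟩ := Submodule.mem_prod.mp hv
  simpa [deformRep_apply] using
    ⟨hρ i j a _ ha hv₁ n, add_mem (hρ i j a _ ha hv₂ n) (hφ i j a _ ha hv₁ n)⟩

lemma deformRep_compr₂_fst :
    (deformRep k ρ φ).compr₂ (cw k (LinearMap.fst k V V)) = ρ.compl₂ (LinearMap.fst k V V) := by
  refine LinearMap.ext fun a => LinearMap.ext fun v => ?_
  ext n
  simp [deformRep_apply]

lemma deformRep_compr₂_snd :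
    (deformRep k ρ φ).compr₂ (cw k (LinearMap.snd k V V))
      = ρ.compl₂ (LinearMap.snd k V V) + φ.compl₂ (LinearMap.fst k V V) := by
  refine LinearMap.ext fun a => LinearMap.ext fun v => ?_
  ext n
  simp [deformRep_apply]

lemma fst_opComp_deformRep (a b : L) (v : V × V) :
    cw k (cw k (LinearMap.fst k V V)) (opComp k (deformRep k ρ φ) (deformRep k ρ φ) a b v)
      = opComp k ρ ρ a b v.1 := by
  rw [← opComp_compr₂, deformRep_compr₂_fst, opComp_compl₂_left, deformRep_compr₂_fst,
    opComp_compl₂_right]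
  rfl

lemma snd_opComp_deformRep (a b : L) (v : V × V) :
    cw k (cw k (LinearMap.snd k V V)) (opComp k (deformRep k ρ φ) (deformRep k ρ φ) a b v)
      = opComp k ρ ρ a b v.2 + opComp k ρ φ a b v.1 + opComp k φ ρ a b v.1 := by
  rw [← opComp_compr₂, deformRep_compr₂_snd, opComp_add_left, opComp_compl₂_left,
    opComp_compl₂_left, deformRep_compr₂_snd, deformRep_compr₂_fst, opComp_add_right,
    opComp_compl₂_right, opComp_compl₂_right, opComp_compl₂_right]
  rfl

lemma fst_opCompSwap_deformRep (b a : L) (v : V × V) :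
    cw k (cw k (LinearMap.fst k V V)) (opCompSwap k (deformRep k ρ φ) (deformRep k ρ φ) b a v)
      = opCompSwap k ρ ρ b a v.1 := by
  rw [opCompSwap_eq, ← swapVar_cw_cw, fst_opComp_deformRep, opCompSwap_eq]

lemma snd_opCompSwap_deformRep (b a : L) (v : V × V) :
    cw k (cw k (LinearMap.snd k V V)) (opCompSwap k (deformRep k ρ φ) (deformRep k ρ φ) b a v)
      = opCompSwap k ρ ρ b a v.2 + opCompSwap k ρ φ b a v.1 + opCompSwap k φ ρ b a v.1 := by
  rw [opCompSwap_eq, ← swapVar_cw_cw, snd_opComp_deformRep, map_add, map_add]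
  rfl

lemma fst_opSubst_deformRep (BL : L →ₗ[k] L →ₗ[k] (ℕ →₀ L)) (a b : L) (v : V × V) :
    cw k (cw k (LinearMap.fst k V V)) (opSubst k BL (deformRep k ρ φ) a b v)
      = opSubst k BL ρ a b v.1 := by
  rw [← opSubst_compr₂, deformRep_compr₂_fst, opSubst_compl₂]
  rfl

lemma snd_opSubst_deformRep (BL : L →ₗ[k] L →ₗ[k] (ℕ →₀ L)) (a b : L) (v : V × V) :
    cw k (cw k (LinearMap.snd k V V)) (opSubst k BL (deformRep k ρ φ) a b v)
      = opSubst k BL ρ a b v.2 + opSubst k BL φ a b v.1 := by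
  rw [← opSubst_compr₂, deformRep_compr₂_snd, opSubst_add, opSubst_compl₂, opSubst_compl₂]
  rfl

lemma deformRep_jacobi_iff (BL : L →ₗ[k] L →ₗ[k] (ℕ →₀ L)) (s : ℤ) (a b : L)
    (hρ : ∀ y, opComp k ρ ρ a b y - s • opCompSwap k ρ ρ b a y = opSubst k BL ρ a b y)
    (v : V × V) :
    opComp k (deformRep k ρ φ) (deformRep k ρ φ) a b v
        - s • opCompSwap k (deformRep k ρ φ) (deformRep k ρ φ) b a v
        = opSubst k BL (deformRep k ρ φ) a b v
      ↔ opSubst k BL φ a b v.1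
          = opComp k φ ρ a b v.1 + opComp k ρ φ a b v.1
            - s • opCompSwap k φ ρ b a v.1 - s • opCompSwap k ρ φ b a v.1 := by
  rw [cw_cw_prod_ext_iff k]
  simp only [map_sub, map_zsmul, fst_opComp_deformRep, fst_opCompSwap_deformRep,
    fst_opSubst_deformRep, snd_opComp_deformRep, snd_opCompSwap_deformRep,
    snd_opSubst_deformRep, hρ v.1, true_and]
  rw [← hρ v.2]
  constructor
  · intro h
    linear_combination (norm := module) -h
  · intro h
    linear_combination (norm := module) -h

end Deformation

end

theorem deformation_iff_cocycle
    (L V : Type) [AddCommGroup L] [Module k L] [AddCommGroup V] [Module k V]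
    (DL : L →ₗ[k] L) (parL : ZMod 2 → Submodule k L) (BL : L →ₗ[k] L →ₗ[k] (ℕ →₀ L))
    (DV : V →ₗ[k] V) (parV : ZMod 2 → Submodule k V)
    (ρ : L →ₗ[k] V →ₗ[k] (ℕ →₀ V))
    (hρ : IsConfRep k DL parL BL DV parV ρ)
    (φ : L →ₗ[k] V →ₗ[k] (ℕ →₀ V))
    (hφ_sesq : IsSesqui k DL DV DV φ)
    (hφ_par : ∀ i j a x, a ∈ parL i → x ∈ parV j → ∀ n, φ a x n ∈ parV (i + j)) :
    IsConfRep k DL parL BL (DV.prodMap DV) (fun i => (parV i).prod (parV i))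
        (((ρ.compl₂ (LinearMap.fst k V V)).compr₂ (cw k (LinearMap.inl k V V)))
          + ((ρ.compl₂ (LinearMap.snd k V V)).compr₂ (cw k (LinearMap.inr k V V)))
          + ((φ.compl₂ (LinearMap.fst k V V)).compr₂ (cw k (LinearMap.inr k V V))))
      ↔ (∀ i j a b, a ∈ parL i → b ∈ parL j → ∀ x : V,
          opSubst k BL φ a b x
            = opComp k φ ρ a b x + opComp k ρ φ a b x
              - sgn i j • opCompSwap k φ ρ b a x - sgn i j • opCompSwap k ρ φ b a x) := by
  change IsConfRep k DL parL BL _ _ (deformRep k ρ φ) ↔ _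
  have jacobi_iff := fun i j a b (ha : a ∈ parL i) (hb : b ∈ parL j) =>
    deformRep_jacobi_iff k ρ φ BL (sgn i j) a b fun y => hρ.jacobi i j a b y ha hb
  constructor
  · intro hε i j a b ha hb x
    exact (jacobi_iff i j a b ha hb (x, 0)).1 (hε.jacobi i j a b (x, 0) ha hb)
  · intro hcocycle
    exact ⟨hρ.sesqui.deformRep k ρ φ hφ_sesq, deformRep_mem_prod k ρ φ hρ.parity hφ_par,
      fun i j a b v ha hb => (jacobi_iff i j a b ha hb v).2 (hcocycle i j a b ha hb v.1)⟩
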